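/- arXiv:2407.21562 — 3 statements merged into one kernel-verified Lean document; each statement's English description precedes it below -/
import Mathlib

section
/- Let A be a set of ordinals and let W be the set of ω-limits of A. Then the set {a ∈ A : w < a for every w ∈ W} is finite. (In particular, every infinite set of ordinals has at least one ω-limit.) -/
open Set

/-- `x` is a limit point of the set `B` of ordinals: `x` is a limit ordinal and
`B ∩ x` is unbounded in `x`. -/
def limitPts (B : Set Ordinal) : Set Ordinal :=
  {x : Ordinal | Order.IsSuccLimit x ∧ ∀ y < x, ∃ b ∈ B, y < b ∧ b < x}

/-- `CBge A α` is `A_{≥α}`, the set of elements of `A` of Cantor–Bendixson rank `≥ α`: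
`A_{≥α} = A \ ⋃_{β<α} A_β` where `A_β = A_{≥β} \ (A_{≥β})*`. -/
noncomputable def CBge (A : Set Ordinal) : Ordinal → Set Ordinal :=
  Ordinal.lt_wf.fix (C := fun _ => Set Ordinal) fun α IH =>
    A \ ⋃ (β : Ordinal), ⋃ (h : β < α), (IH β h \ limitPts (IH β h))

/-- `CBpart A β` is `A_β`, the set of elements of `A` of Cantor–Bendixson rank exactly `β`. -/
noncomputable def CBpart (A : Set Ordinal) (β : Ordinal) : Set Ordinal :=
  CBge A β \ limitPts (CBge A β)

/-- The set of ω-limits of a set `B` of ordinals: suprema of strictly increasing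
ℕ-indexed sequences of elements of `B`. -/
def omegaLimits (B : Set Ordinal) : Set Ordinal :=
  {l : Ordinal | ∃ f : ℕ → Ordinal, StrictMono f ∧ (∀ n, f n ∈ B) ∧ l = ⨆ n, f n}

/-- `Wpart A β` is `W_β(A)`, the set of ω-limits of `A_β`. -/
noncomputable def Wpart (A : Set Ordinal) (β : Ordinal) : Set Ordinal :=
  omegaLimits (CBpart A β)

/-- `Sseq A β lam` is `S_β^λ(A) = {x ∈ A_β : sup(W_β(A) ∩ λ) < x < λ}`. -/
noncomputable def Sseq (A : Set Ordinal) (β lam : Ordinal) : Set Ordinal :=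
  {x : Ordinal | x ∈ CBpart A β ∧ sSup (Wpart A β ∩ Set.Iio lam) < x ∧ x < lam}

/-! An infinite set of ordinals contains a strictly increasing ω-sequence (the strictly
decreasing alternative is excluded by well-foundedness). Its supremum is an ω-limit that is
not below its first term, so infinitely many elements cannot all lie above every ω-limit. -/

theorem Set.Infinite.exists_strictMono_seq {α : Type*} [LinearOrder α] [WellFoundedLT α]
    {s : Set α} (hs : s.Infinite) : ∃ f : ℕ → α, StrictMono f ∧ ∀ n, f n ∈ s := by
  have := hs.to_subtype
  obtain ⟨f, hf | hf⟩ := Infinite.exists_strictMono_or_strictAnti s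
  · exact ⟨fun n ↦ f n, (Subtype.strictMono_coe _).comp hf, fun n ↦ (f n).2⟩
  · exact (not_strictAnti_of_wellFoundedLT f hf).elim

theorem omegaLimits_mono {B C : Set Ordinal} (h : B ⊆ C) : omegaLimits B ⊆ omegaLimits C :=
  fun _ ⟨f, hf, hfB, hl⟩ ↦ ⟨f, hf, fun n ↦ h (hfB n), hl⟩

theorem Set.Infinite.exists_le_omegaLimit {B : Set Ordinal} (hB : B.Infinite) :
    ∃ b ∈ B, ∃ w ∈ omegaLimits B, b ≤ w := by
  obtain ⟨f, hf, hfB⟩ := hB.exists_strictMono_seq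
  exact ⟨f 0, hfB 0, ⨆ n, f n, ⟨f, hf, hfB, rfl⟩, Ordinal.le_iSup f 0⟩

/-- For a set `A` of ordinals, the set of elements of `A` that lie strictly
above every ω-limit of `A` is finite. -/
theorem finite_above_all_omegaLimits (A : Set Ordinal) :
    {a | a ∈ A ∧ ∀ w ∈ omegaLimits A, w < a}.Finite := by
  by_contra hinf
  obtain ⟨a, ⟨-, ha⟩, w, hw, haw⟩ := (Set.not_finite.mp hinf).exists_le_omegaLimit
  exact (ha w (omegaLimits_mono (fun _ hx ↦ hx.1) hw)).not_ge haw
end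

section
/- Let A be a set of ordinals, let γ < β be ordinals, and let a ∈ A_β. Then a is a limit point of A_γ; that is, A_γ ∩ a is unbounded in a. -/
open Set

/-
An element of `A_β` lies in `A_{≥γ}` but not in `A_γ`, so it is a limit point of `A_{≥γ}`.
Below such a limit point `a`, above any `y < a`, the least element of `A_{≥γ}` in `(y, a)` is
isolated in `A_{≥γ}`, i.e. it lies in `A_γ`.
-/

lemma CBge_eq (A : Set Ordinal) (α : Ordinal) :
    CBge A α = A \ ⋃ (β : Ordinal), ⋃ (_ : β < α), CBpart A β := by
  rw [CBge, WellFounded.fix_eq]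
  rfl

lemma CBge_antitone (A : Set Ordinal) : Antitone (CBge A) := by
  intro α α' h x hx
  rw [CBge_eq] at hx ⊢
  refine ⟨hx.1, fun hmem => hx.2 ?_⟩
  simp only [mem_iUnion] at hmem ⊢
  obtain ⟨β, hβ, hb⟩ := hmem
  exact ⟨β, hβ.trans_le h, hb⟩

lemma notMem_CBpart_of_mem_CBge (A : Set Ordinal) {α α' : Ordinal} (h : α < α') {x : Ordinal}
    (hx : x ∈ CBge A α') : x ∉ CBpart A α := by
  rw [CBge_eq] at hx
  exact fun hmem => hx.2 (mem_iUnion₂.2 ⟨α, h, hmem⟩)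

lemma mem_limitPts_CBge_of_lt (A : Set Ordinal) {γ β a : Ordinal} (hγβ : γ < β)
    (ha : a ∈ CBpart A β) : a ∈ limitPts (CBge A γ) := by
  by_contra hlim
  exact notMem_CBpart_of_mem_CBge A hγβ ha.1 ⟨CBge_antitone A hγβ.le ha.1, hlim⟩

lemma limitPts_subset_limitPts_diff_limitPts (B : Set Ordinal) :
    limitPts B ⊆ limitPts (B \ limitPts B) := by
  intro a ha
  refine ⟨ha.1, fun y hy => ?_⟩
  have hne : (B ∩ Ioo y a).Nonempty := by
    obtain ⟨b, hb, hyb, hba⟩ := ha.2 y hy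
    exact ⟨b, hb, hyb, hba⟩
  obtain ⟨hbB, hyb, hba⟩ := Ordinal.lt_wf.min_mem _ hne
  refine ⟨Ordinal.lt_wf.min _ hne, ⟨hbB, fun hlim => ?_⟩, hyb, hba⟩
  obtain ⟨c, hc, hyc, hcb⟩ := hlim.2 y hyb
  exact Ordinal.lt_wf.not_lt_min (B ∩ Ioo y a) (x := c) ⟨hc, hyc, hcb.trans hba⟩ hcb

/-- If `γ < β` and `a ∈ A_β`, then `a` is a limit point of `A_γ`;
in particular `A_γ ∩ a` is unbounded in `a`. -/
theorem CBpart_mem_limitPts_of_lt (A : Set Ordinal) (γ β : Ordinal) (hγβ : γ < β)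
    (a : Ordinal) (ha : a ∈ CBpart A β) :
    a ∈ limitPts (CBpart A γ) ∧ ∀ y < a, ∃ b ∈ CBpart A γ, y < b ∧ b < a := by
  have h : a ∈ limitPts (CBpart A γ) :=
    limitPts_subset_limitPts_diff_limitPts _ (mem_limitPts_CBge_of_lt A hγβ ha)
  exact ⟨h, h.2⟩
end

section
/- Let A be a set of ordinals and β an ordinal, and suppose some element of A_β is strictly above every element of W_β(A). Then A_β is nonempty and has a maximum element, and this maximum element is strictly above every element of W_β(A). -/
open Set

/-!
A set of ordinals without a maximum contains a strictly increasing ω-sequence starting at any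
of its elements; the supremum of that sequence is an ω-limit lying above the starting point.
So an element above all ω-limits of `A_β` forces `A_β` to have a maximum, which is then above
all ω-limits as well.
-/

theorem exists_strictMono_seq_of_forall_exists_gt {B : Set Ordinal}
    (hB : ∀ x ∈ B, ∃ y ∈ B, x < y) {a : Ordinal} (ha : a ∈ B) :
    ∃ f : ℕ → Ordinal, StrictMono f ∧ (∀ n, f n ∈ B) ∧ f 0 = a := by
  have : NoMaxOrder B := ⟨fun ⟨x, hx⟩ =>
    let ⟨y, hy, hxy⟩ := hB x hx
    ⟨⟨y, hy⟩, hxy⟩⟩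
  obtain ⟨f, hf, hf0⟩ := Nat.exists_strictMono' (⟨a, ha⟩ : B)
  exact ⟨fun n => f n, hf, fun n => (f n).2, congrArg Subtype.val hf0⟩

theorem exists_isGreatest_of_forall_omegaLimits_lt {B : Set Ordinal} {a : Ordinal}
    (ha : a ∈ B) (haW : ∀ w ∈ omegaLimits B, w < a) : ∃ m, IsGreatest B m := by
  by_contra! hnoMax
  have hB : ∀ x ∈ B, ∃ y ∈ B, x < y := fun x hx => by
    simpa [IsGreatest, upperBounds, hx] using hnoMax x
  obtain ⟨f, hf, hfB, hf0⟩ := exists_strictMono_seq_of_forall_exists_gt hB ha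
  have hsup : (⨆ n, f n) ∈ omegaLimits B := ⟨f, hf, hfB, rfl⟩
  have ha_le : a ≤ ⨆ n, f n := hf0 ▸ Ordinal.le_iSup f 0
  exact (haW _ hsup).not_ge ha_le

/-- If some element of `A_β` is strictly above every element of `W_β(A)`,
then `A_β` is nonempty and has a maximum element, which is strictly above every element
of `W_β(A)`. -/
theorem CBpart_has_max_of_above_omegaLimits (A : Set Ordinal) (β : Ordinal)
    (h : ∃ a ∈ CBpart A β, ∀ w ∈ Wpart A β, w < a) :
    ∃ m ∈ CBpart A β, (∀ a ∈ CBpart A β, a ≤ m) ∧ ∀ w ∈ Wpart A β, w < m := by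
  obtain ⟨a, ha, haW⟩ := h
  obtain ⟨m, hm, hmax⟩ := exists_isGreatest_of_forall_omegaLimits_lt ha haW
  exact ⟨m, hm, hmax, fun w hw => (haW w hw).trans_le (hmax ha)⟩
end
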